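/- arXiv:1604.01576 — 3 statements merged into one kernel-verified Lean document; each statement's English description precedes it below -/
import Mathlib

section
/- Let F(z) = ∑_{j,k=1}^N Γ_j Γ_k g(z_j, z_k) with g symmetric and C², h(z) = g(z,z), and let P_D : ℝ^{2N} → D be the orthogonal projection onto the diagonal subspace D = {(a, …, a) : a ∈ ℝ²}. Then for c ∈ Ω, P_D[∇F(ĉ)] = (1/N) (∑_{k=1}^N Γ_k)² · (∇h(c), …, ∇h(c)). In particular, if ∑ Γ_k ≠ 0, then P_D[∇F(ĉ)] = 0 if and only if ∇h(c) = 0. -/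
open Matrix
open scoped BigOperators

/-- `F(z) = ∑_{j,k} Γ_j Γ_k g(z_j, z_k)`. -/
noncomputable def Ffun {N : ℕ} (Γ : Fin N → ℝ) (g : (Fin 2 → ℝ) → (Fin 2 → ℝ) → ℝ)
    (z : Fin N → Fin 2 → ℝ) : ℝ :=
  ∑ j : Fin N, ∑ k : Fin N, Γ j * Γ k * g (z j) (z k)

/-!
Symmetry of `g` forces its derivative at a diagonal point `(c, c)` to have the form
`(v, w) ↦ d v + d w`, where `d` is the partial derivative in the first slot. Hence `∇h(c) = 2 d`,
and moving only the `j`-th point of `ĉ` changes `F` at the rate `2 Γ_j (∑ Γ) d`, i.e.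
`∇_j F(ĉ) = Γ_j (∑ Γ) ∇h(c)`. Averaging over `j` gives the projection onto `D`.
-/

section SymmetricKernel

variable {𝕜 E F : Type*} [NontriviallyNormedField 𝕜]
  [NormedAddCommGroup E] [NormedSpace 𝕜 E] [NormedAddCommGroup F] [NormedSpace 𝕜 F]
  {g : E → E → F} {L : E × E →L[𝕜] F} {c : E}

theorem HasFDerivAt.eq_coprod_of_symm (hsym : ∀ x y, g x y = g y x)
    (hL : HasFDerivAt (fun p : E × E => g p.1 p.2) L (c, c)) :
    L = (L.comp (.inl 𝕜 E E)).coprod (L.comp (.inl 𝕜 E E)) := by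
  have hswap : HasFDerivAt (fun p : E × E => g p.1 p.2)
      (L.comp (ContinuousLinearEquiv.prodComm 𝕜 E E : E × E →L[𝕜] E × E)) (c, c) := by
    have := hL.comp (c, c) (ContinuousLinearEquiv.prodComm 𝕜 E E).hasFDerivAt
    simpa [Function.comp_def, hsym] using this
  have hinr : L.comp (.inr 𝕜 E E) = L.comp (.inl 𝕜 E E) := by
    ext v
    simpa using congr($(hL.unique hswap) (0, v))
  ext v <;> simp [hinr]

theorem HasFDerivAt.diag_of_symm (hsym : ∀ x y, g x y = g y x)
    (hL : HasFDerivAt (fun p : E × E => g p.1 p.2) L (c, c)) :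
    HasFDerivAt (fun x => g x x) ((2 : 𝕜) • L.comp (.inl 𝕜 E E)) c := by
  have hdiag : HasFDerivAt (fun x : E => (x, x)) ((ContinuousLinearMap.id 𝕜 E).prod (.id 𝕜 E)) c :=
    (hasFDerivAt_id c).prodMk (hasFDerivAt_id c)
  refine (HasFDerivAt.comp (f := fun x : E => (x, x)) c hL hdiag).congr_fderiv ?_
  ext v
  simpa [two_smul] using congr($(hL.eq_coprod_of_symm hsym) (v, v))

end SymmetricKernel

theorem sum_sum_mul_mul_add {ι R : Type*} [Fintype ι] [CommSemiring R] (Γ a : ι → R) :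
    ∑ j, ∑ k, Γ j * Γ k * (a j + a k) = 2 * (∑ k, Γ k) * ∑ j, Γ j * a j := by
  simp only [mul_add, Finset.sum_add_distrib]
  rw [Finset.sum_comm (f := fun j k => Γ j * Γ k * a k), mul_assoc, two_mul]
  simp only [Finset.mul_sum, Finset.sum_mul]
  congr 1 <;> exact Finset.sum_congr rfl fun _ _ => Finset.sum_congr rfl fun _ _ => by ring

theorem hasFDerivAt_Ffun_update {N : ℕ} (Γ : Fin N → ℝ) {g : (Fin 2 → ℝ) → (Fin 2 → ℝ) → ℝ}
    {L : (Fin 2 → ℝ) × (Fin 2 → ℝ) →L[ℝ] ℝ} {c : Fin 2 → ℝ} (hsym : ∀ x y, g x y = g y x)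
    (hL : HasFDerivAt (fun p : (Fin 2 → ℝ) × (Fin 2 → ℝ) => g p.1 p.2) L (c, c)) (j : Fin N) :
    HasFDerivAt (fun w => Ffun Γ g (Function.update (fun _ => c) j w))
      ((Γ j * ∑ k, Γ k) • (2 : ℝ) • L.comp (.inl ℝ _ _)) c := by
  have hupd := hasFDerivAt_update (𝕜 := ℝ) (fun _ : Fin N => c) c (i := j)
  have hterm (j' k' : Fin N) := by
    have hpair := ((hasFDerivAt_apply j' _).comp c hupd).prodMk ((hasFDerivAt_apply k' _).comp c hupd)
    exact HasFDerivAt.comp c (by simpa using hL) hpair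
  refine (HasFDerivAt.fun_sum fun j' _ => HasFDerivAt.fun_sum fun k' _ =>
    (hterm j' k').const_mul (Γ j' * Γ k')).congr_fderiv ?_
  ext v
  -- `d` is kept opaque so that `simp` cannot unfold it back into `L` and loop on `hsplit`.
  obtain ⟨d, hsplit⟩ : ∃ d : (Fin 2 → ℝ) →L[ℝ] ℝ, ∀ x y, L (x, y) = d x + d y :=
    ⟨L.comp (.inl ℝ _ _), fun x y => by simpa using congr($(hL.eq_coprod_of_symm hsym) (x, y))⟩
  simp only [FunLike.coe_sum, Finset.sum_apply, FunLike.coe_smul, Pi.smul_apply,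
    ContinuousLinearMap.comp_apply, ContinuousLinearMap.prod_apply, ContinuousLinearMap.proj_apply,
    ContinuousLinearMap.pi_apply, ContinuousLinearMap.inl_apply, smul_eq_mul, hsplit]
  rw [sum_sum_mul_mul_add]
  simp [Pi.single_apply, ite_apply, apply_ite]
  ring

theorem stmt_7_general (N : ℕ) (hN : 2 ≤ N) (Γ : Fin N → ℝ)
    (Ω : Set (Fin 2 → ℝ)) (hΩ : IsOpen Ω)
    (g : (Fin 2 → ℝ) → (Fin 2 → ℝ) → ℝ)
    (hsym : ∀ x y, g x y = g y x)
    (hg : ContDiffOn ℝ 2 (fun p : (Fin 2 → ℝ) × (Fin 2 → ℝ) => g p.1 p.2) (Ω ×ˢ Ω))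
    (c : Fin 2 → ℝ) (hc : c ∈ Ω)
    (gradF : Fin N → Fin 2 → ℝ) (gradh : Fin 2 → ℝ)
    (hgradF : ∀ (j : Fin N) (v : Fin 2 → ℝ),
      fderiv ℝ (fun w => Ffun Γ g (Function.update (fun _ : Fin N => c) j w)) c v
        = gradF j ⬝ᵥ v)
    (hgradh : ∀ v : Fin 2 → ℝ, fderiv ℝ (fun x => g x x) c v = gradh ⬝ᵥ v) :
    ((fun _ : Fin N => (N : ℝ)⁻¹ • ∑ k : Fin N, gradF k)
        = fun _ : Fin N => (((∑ k : Fin N, Γ k) ^ 2 / N) • gradh))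
    ∧ ((∑ k : Fin N, Γ k) ≠ 0 →
        (((fun _ : Fin N => (N : ℝ)⁻¹ • ∑ k : Fin N, gradF k)
            = (0 : Fin N → Fin 2 → ℝ)) ↔ gradh = 0)) := by
  have hG := ((hg.differentiableOn (by norm_num)).differentiableAt
    ((hΩ.prod hΩ).mem_nhds (Set.mk_mem_prod hc hc))).hasFDerivAt
  have hgradF_eq (j : Fin N) : gradF j = (Γ j * ∑ k, Γ k) • gradh :=
    dotProduct_eq _ _ fun v => by
      rw [← hgradF, smul_dotProduct, ← hgradh, (hasFDerivAt_Ffun_update Γ hsym hG j).fderiv,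
        (hG.diag_of_symm hsym).fderiv]
      rfl
  have hN0 : (N : ℝ) ≠ 0 := Nat.cast_ne_zero.mpr (by omega)
  have hproj : (fun _ : Fin N => (N : ℝ)⁻¹ • ∑ k, gradF k)
      = fun _ => ((∑ k, Γ k) ^ 2 / N) • gradh := by
    simp only [hgradF_eq, ← Finset.sum_smul, ← Finset.sum_mul, smul_smul]
    field_simp
  refine ⟨hproj, fun hS => ?_⟩
  have : Nonempty (Fin N) := ⟨⟨0, by omega⟩⟩
  simp [hproj, funext_iff, hS, hN0]

/-- with `P_D` the orthogonal projection onto the diagonal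
`D = {(a,…,a)}` (i.e. componentwise averaging), the gradient of `F` at `ĉ` satisfies
`P_D[∇F(ĉ)] = (1/N)(∑Γ_k)² (∇h(c),…,∇h(c))`; in particular if `∑Γ_k ≠ 0` then
`P_D[∇F(ĉ)] = 0 ↔ ∇h(c) = 0`. -/
theorem stmt_7 (N : ℕ) (hN : 2 ≤ N) (Γ : Fin N → ℝ) (hΓ : ∀ k, Γ k ≠ 0)
    (Ω : Set (Fin 2 → ℝ)) (hΩ : IsOpen Ω)
    (g : (Fin 2 → ℝ) → (Fin 2 → ℝ) → ℝ)
    (hsym : ∀ x y, g x y = g y x)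
    (hg : ContDiffOn ℝ 2 (fun p : (Fin 2 → ℝ) × (Fin 2 → ℝ) => g p.1 p.2) (Ω ×ˢ Ω))
    (c : Fin 2 → ℝ) (hc : c ∈ Ω)
    (gradF : Fin N → Fin 2 → ℝ) (gradh : Fin 2 → ℝ)
    (hgradF : ∀ (j : Fin N) (v : Fin 2 → ℝ),
      fderiv ℝ (fun w => Ffun Γ g (Function.update (fun _ : Fin N => c) j w)) c v
        = gradF j ⬝ᵥ v)
    (hgradh : ∀ v : Fin 2 → ℝ, fderiv ℝ (fun x => g x x) c v = gradh ⬝ᵥ v) :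
    ((fun _ : Fin N => (N : ℝ)⁻¹ • ∑ k : Fin N, gradF k)
        = fun _ : Fin N => (((∑ k : Fin N, Γ k) ^ 2 / N) • gradh))
    ∧ ((∑ k : Fin N, Γ k) ≠ 0 →
        (((fun _ : Fin N => (N : ℝ)⁻¹ • ∑ k : Fin N, gradF k)
            = (0 : Fin N → Fin 2 → ℝ)) ↔ gradh = 0)) :=
  stmt_7_general N hN Γ Ω hΩ g hsym hg c hc gradF gradh hgradF hgradh
end

section
/- Let A be the 4×4 matrix with A₂₁ = 2ω, A₃₄ = -ω, A₄₃ = ω and all other entries zero, where ω ≠ 0. Then the space of 2π/|ω|-periodic solutions of the linear ODE ẇ = Aw has dimension exactly 3. -/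
/-!
The matrix splits into two invariant blocks. On the first two coordinates it is the nilpotent
block `w₀' = 0`, `w₁' = 2ω w₀`: `w₀` is constant and `w₁` grows linearly with slope `2ω w₀`, so
periodicity forces `w₀ = 0` and leaves only the constant solutions `w₁ = c`. On the last two
coordinates it is the rotation `w₂' = -ω w₃`, `w₃' = ω w₂`, whose solutions are exactly
`(w₂, w₃)(t) = R(ωt) (w₂, w₃)(0)`, all of period `2π/|ω|`. Hence the periodic solutions are
parametrised by `(w₁(0), w₂(0), w₃(0))`.
-/

open Matrix Real Function

lemma const_of_hasDerivAt_zero {f : ℝ → ℝ} (hf : ∀ t, HasDerivAt f 0 t) (t : ℝ) : f t = f 0 :=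
  is_const_of_deriv_eq_zero (fun s ↦ (hf s).differentiableAt) (fun s ↦ (hf s).deriv) t 0

lemma eq_zero_of_hasDerivAt_const_of_periodic {f : ℝ → ℝ} {c T : ℝ}
    (hf : ∀ t, HasDerivAt f c t) (hp : Periodic f T) (hT : T ≠ 0) : c = 0 := by
  have hdrift : ∀ t, HasDerivAt (fun s ↦ f s - c * s) 0 t := fun t ↦
    ((hf t).sub ((hasDerivAt_id t).const_mul c)).congr_deriv (by simp)
  have hT' := const_of_hasDerivAt_zero hdrift T
  rw [hp.eq] at hT'
  simpa [hT] using hT'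

lemma Function.Periodic.comp_mul_abs {α : Type*} {f : ℝ → α} {c : ℝ} (hf : Periodic f c) (a : ℝ) :
    Periodic (fun x ↦ f (a * x)) (c / |a|) := by
  rcases abs_choice a with h | h <;> rw [h]
  · simpa only [div_eq_inv_mul] using hf.const_mul a
  · rw [div_neg, div_eq_inv_mul]
    exact (hf.const_mul a).neg

lemma hasDerivAt_cos_mul (ω t : ℝ) :
    HasDerivAt (fun s ↦ cos (ω * s)) (-(ω * sin (ω * t))) t := by
  simpa [mul_comm] using ((hasDerivAt_id t).const_mul ω).cos

lemma hasDerivAt_sin_mul (ω t : ℝ) :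
    HasDerivAt (fun s ↦ sin (ω * s)) (ω * cos (ω * t)) t := by
  simpa [mul_comm] using ((hasDerivAt_id t).const_mul ω).sin

lemma rotation_solution_eq {ω : ℝ} {x y : ℝ → ℝ}
    (hx : ∀ t, HasDerivAt x (-(ω * y t)) t) (hy : ∀ t, HasDerivAt y (ω * x t) t) (t : ℝ) :
    x t = x 0 * cos (ω * t) - y 0 * sin (ω * t) ∧
      y t = x 0 * sin (ω * t) + y 0 * cos (ω * t) := by
  -- In the frame rotating with angular velocity `ω` the point `(x, y)` stands still.
  have hu : ∀ s, HasDerivAt (fun s ↦ x s * cos (ω * s) + y s * sin (ω * s)) 0 s := fun s ↦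
    (((hx s).mul (hasDerivAt_cos_mul ω s)).add ((hy s).mul (hasDerivAt_sin_mul ω s))).congr_deriv
      (by ring)
  have hv : ∀ s, HasDerivAt (fun s ↦ y s * cos (ω * s) - x s * sin (ω * s)) 0 s := fun s ↦
    (((hy s).mul (hasDerivAt_cos_mul ω s)).sub ((hx s).mul (hasDerivAt_sin_mul ω s))).congr_deriv
      (by ring)
  have hu0 := const_of_hasDerivAt_zero hu t
  have hv0 := const_of_hasDerivAt_zero hv t
  simp only [mul_zero, cos_zero, sin_zero, mul_one, add_zero, sub_zero] at hu0 hv0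
  have hpyth := sin_sq_add_cos_sq (ω * t)
  constructor
  · linear_combination cos (ω * t) * hu0 - sin (ω * t) * hv0 - x t * hpyth
  · linear_combination sin (ω * t) * hu0 + cos (ω * t) * hv0 - y t * hpyth

def shearRotationMatrix (ω : ℝ) : Matrix (Fin 4) (Fin 4) ℝ :=
  !![0, 0, 0, 0; 2 * ω, 0, 0, 0; 0, 0, 0, -ω; 0, 0, ω, 0]

lemma hasDerivAt_shearRotationMatrix_mulVec_iff {ω t : ℝ} {w : ℝ → Fin 4 → ℝ} :
    HasDerivAt w (shearRotationMatrix ω *ᵥ w t) t ↔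
      HasDerivAt (w · 0) 0 t ∧ HasDerivAt (w · 1) (2 * ω * w t 0) t ∧
        HasDerivAt (w · 2) (-(ω * w t 3)) t ∧ HasDerivAt (w · 3) (ω * w t 2) t := by
  rw [hasDerivAt_pi, Fin.forall_fin_succ, Fin.forall_fin_succ, Fin.forall_fin_succ,
    Fin.forall_fin_one]
  simp [shearRotationMatrix, mulVec, dotProduct, Fin.sum_univ_four]

noncomputable def periodicBasis (ω : ℝ) : Fin 3 → ℝ → Fin 4 → ℝ :=
  ![fun _ ↦ ![0, 1, 0, 0],
    fun t ↦ ![0, 0, cos (ω * t), sin (ω * t)],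
    fun t ↦ ![0, 0, -sin (ω * t), cos (ω * t)]]

lemma periodicBasis_hasDerivAt (ω : ℝ) (i : Fin 3) (t : ℝ) :
    HasDerivAt (periodicBasis ω i) (shearRotationMatrix ω *ᵥ periodicBasis ω i t) t := by
  rw [hasDerivAt_shearRotationMatrix_mulVec_iff]
  fin_cases i <;>
    simp [periodicBasis, hasDerivAt_const, hasDerivAt_cos_mul, hasDerivAt_sin_mul,
      (hasDerivAt_sin_mul ω t).fun_neg]

lemma periodicBasis_periodic {ω : ℝ} (i : Fin 3) :
    Periodic (periodicBasis ω i) (2 * π / |ω|) := by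
  have hcos := cos_periodic.comp_mul_abs ω
  have hsin := sin_periodic.comp_mul_abs ω
  intro t
  fin_cases i <;> simp [periodicBasis, hcos t, hsin t]

lemma linearIndependent_periodicBasis (ω : ℝ) : LinearIndependent ℝ (periodicBasis ω) := by
  rw [Fintype.linearIndependent_iff]
  intro g hg i
  have hg0 : g 0 = 0 ∧ g 1 = 0 ∧ g 2 = 0 := by
    simpa [periodicBasis, Fin.sum_univ_three, funext_iff, Fin.forall_fin_succ] using congrFun hg 0
  fin_cases i <;> simp [hg0]

lemma sum_smul_periodicBasis_eq_of_periodic {ω T : ℝ} (hω : ω ≠ 0) (hT : T ≠ 0)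
    {w : ℝ → Fin 4 → ℝ}
    (hw : ∀ t, HasDerivAt w (shearRotationMatrix ω *ᵥ w t) t) (hper : Periodic w T) :
    ∑ i, ![w 0 1, w 0 2, w 0 3] i • periodicBasis ω i = w := by
  simp only [hasDerivAt_shearRotationMatrix_mulVec_iff] at hw
  have hw0 : ∀ t, w t 0 = w 0 0 := const_of_hasDerivAt_zero fun t ↦ (hw t).1
  have hslope : 2 * ω * w 0 0 = 0 :=
    eq_zero_of_hasDerivAt_const_of_periodic (fun t ↦ hw0 t ▸ (hw t).2.1)
      (fun t ↦ congrFun (hper t) 1) hT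
  have hw00 : w 0 0 = 0 := by simpa [hω] using hslope
  have hw1 : ∀ t, w t 1 = w 0 1 :=
    const_of_hasDerivAt_zero fun t ↦ by simpa [hw0 t, hw00] using (hw t).2.1
  have hrot := rotation_solution_eq (fun t ↦ (hw t).2.2.1) (fun t ↦ (hw t).2.2.2)
  funext t j
  fin_cases j <;>
    simp [periodicBasis, Fin.sum_univ_three, hw0 t, hw00, hw1 t, hrot t, sub_eq_add_neg]

/-- the space of `2π/|ω|`-periodic solutions of `ẇ = Aw`, with
`A` the 4×4 matrix whose only nonzero entries are `A₂₁ = 2ω`, `A₃₄ = -ω`, `A₄₃ = ω`,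
has dimension exactly 3: there are three linearly independent periodic solutions
spanning all periodic solutions. -/
theorem stmt_8 (ω : ℝ) (hω : ω ≠ 0) :
    let A : Matrix (Fin 4) (Fin 4) ℝ :=
      !![0, 0, 0, 0; 2 * ω, 0, 0, 0; 0, 0, 0, -ω; 0, 0, ω, 0]
    ∃ B : Fin 3 → (ℝ → Fin 4 → ℝ),
      LinearIndependent ℝ B ∧
      (∀ i, (∀ t, HasDerivAt (B i) (A *ᵥ B i t) t) ∧
        Function.Periodic (B i) (2 * Real.pi / |ω|)) ∧
      ∀ w : ℝ → Fin 4 → ℝ, (∀ t, HasDerivAt w (A *ᵥ w t) t) →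
        Function.Periodic w (2 * Real.pi / |ω|) →
        w ∈ Submodule.span ℝ (Set.range B) := by
  intro A
  refine ⟨periodicBasis ω, linearIndependent_periodicBasis ω,
    fun i ↦ ⟨periodicBasis_hasDerivAt ω i, periodicBasis_periodic i⟩, fun w hw hper ↦ ?_⟩
  have hT : 2 * π / |ω| ≠ 0 := by positivity
  exact (Submodule.mem_span_range_iff_exists_fun ℝ).2
    ⟨_, sum_smul_periodicBasis_eq_of_periodic hω hT hw hper⟩
end

section
/- Let X be a separable Hilbert space with orthogonal decomposition X = closure(⊕_{k≥0} E_k) into pairwise orthogonal finite-dimensional subspaces, let X_n = ⊕_{k=0}^n E_k with orthogonal projection P_n, let L ∈ B(X) be bounded self-adjoint with Kern(L) = E₀ and L(E_k) = E_k for k ≠ 0, such that L + P₀ is an isomorphism onto a Hilbert subspace Y ≤ X. Let Ψ : cl(O) → X be continuous on the closure of a bounded set O ⊂ X with image contained in Y and (L+P₀)^{-1}∘Ψ(cl(O)) relatively compact in X. If Lu - Ψ(u) = 0 has no solution u ∈ ∂O, then there exists n₀ ∈ ℕ such that for all n ≥ n₀ and t ∈ [0,1] the equation Lu - P_{n₀}Ψ(u)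 - t(P_n - P_{n₀})Ψ(u) = 0 has no solution u ∈ X_n ∩ ∂O. -/
/-!
Suppose not: then there are `m → ∞`, `n_m ≥ m`, `t_m ∈ [0,1]` and `u_m ∈ ∂O` with
`L u_m = Q_m Ψ(u_m)`, where `Q_m = P_m + t_m (P_{n_m} - P_m)`. The projections `P_k` commute
with the self-adjoint `L` (which preserves each `X_k`) and absorb `P₀`, so injectivity of
`L + P₀` turns the equation into `u_m = Q_m Φ(u_m) + P₀ u_m`. By compactness of `Φ(cl O)` and
finite dimensionality of `E₀`, along a subsequence `Φ(u_m) → v` and `P₀ u_m → z`. Since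
`P_k → id` strongly and `‖P_k‖ ≤ 1`, also `Q_m Φ(u_m) → v`, hence `u_m → v + z ∈ ∂O`, and
letting `m → ∞` in `L u_m = Q_m Ψ(u_m)` gives `L (v + z) = Ψ (v + z)`.
-/

open Filter Topology Set AffineMap

namespace Submodule

variable {𝕜 E : Type*} [RCLike 𝕜] [NormedAddCommGroup E] [InnerProductSpace 𝕜 E]

theorem hasOrthogonalProjection_of_inner_sub_eq_zero {K : Submodule 𝕜 E} (p : E → E)
    (hp : ∀ x, p x ∈ K) (hpK : ∀ x, ∀ w ∈ K, inner 𝕜 (x - p x) w = 0) :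
    K.HasOrthogonalProjection :=
  ⟨fun x => ⟨p x, hp x, (mem_orthogonal' K _).2 (hpK x)⟩⟩

variable {K : ℕ → Submodule 𝕜 E} [∀ n, (K n).HasOrthogonalProjection]

theorem tendsto_starProjection_apply (hK : Monotone K)
    (hKdense : ⊤ ≤ (⨆ n, K n).topologicalClosure) {ι : Type*} {l : Filter ι}
    {m : ι → ℕ} (hm : Tendsto m l atTop) {w : ι → E} {v : E} (hw : Tendsto w l (𝓝 v)) :
    Tendsto (fun i => (K (m i)).starProjection (w i)) l (𝓝 v) := by
  have hdiff : Tendsto (fun i => (K (m i)).starProjection (w i - v)) l (𝓝 0) :=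
    squeeze_zero_norm (fun i => norm_starProjection_apply_le _ _)
      (tendsto_iff_norm_sub_tendsto_zero.1 hw)
  have hv : Tendsto (fun i => (K (m i)).starProjection v) l (𝓝 v) :=
    (starProjection_tendsto_self K hK v hKdense).comp hm
  simpa only [map_sub, sub_add_cancel, zero_add] using hdiff.add hv

theorem tendsto_lineMap_starProjection_apply (hK : Monotone K)
    (hKdense : ⊤ ≤ (⨆ n, K n).topologicalClosure) {ι : Type*} {l : Filter ι} {m n : ι → ℕ}
    (hm : Tendsto m l atTop) (hn : Tendsto n l atTop) {t : ι → 𝕜}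
    (ht : IsBoundedUnder (· ≤ ·) l (norm ∘ t)) {w : ι → E} {v : E} (hw : Tendsto w l (𝓝 v)) :
    Tendsto (fun i => lineMap (K (m i)).starProjection (K (n i)).starProjection (t i) (w i)) l
      (𝓝 v) := by
  have hm' := tendsto_starProjection_apply hK hKdense hm hw
  have hn' := tendsto_starProjection_apply hK hKdense hn hw
  have hdiff := ht.smul_tendsto_zero (by simpa only [sub_self] using hn'.sub hm')
  simpa only [lineMap_apply_module', add_apply, smul_apply, sub_apply, zero_add] using
    hdiff.add hm'

end Submodule

theorem Submodule.mapsTo_partialSups {ι R M : Type*} [Preorder ι] [LocallyFiniteOrderBot ι]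
    [Semiring R] [AddCommMonoid M] [Module R M] {f : M →ₗ[R] M} {E : ι → Submodule R M}
    (hf : ∀ k, E k ≤ (E k).comap f) (n : ι) : MapsTo f (partialSups E n) (partialSups E n) :=
  partialSups_le _ _ _ fun k hk => (hf k).trans (comap_mono (le_partialSups_of_le E hk))

theorem LinearMap.IsSymmetric.starProjection_apply_comm {𝕜 E : Type*} [RCLike 𝕜]
    [NormedAddCommGroup E] [InnerProductSpace 𝕜 E] {T : E →ₗ[𝕜] E} (hT : T.IsSymmetric)
    {K : Submodule 𝕜 E} [K.HasOrthogonalProjection] (hTK : MapsTo T K K) (x : E) :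
    K.starProjection (T x) = T (K.starProjection x) :=
  K.eq_starProjection_of_mem_of_inner_eq_zero (hTK (K.starProjection_apply_mem x)) fun w hw => by
    rw [← map_sub, hT, K.starProjection_inner_eq_zero _ _ (hTK hw)]

theorem eq_add_of_injective_add_of_apply_eq {M F : Type*} [AddCommMonoid M] [FunLike F M M]
    [AddMonoidHomClass F M M] {L p Q : F} (hinj : Function.Injective fun x => L x + p x)
    (hLQ : ∀ x, L (Q x) = Q (L x)) (hQp : ∀ x, Q (p x) = p x) (hpQ : ∀ x, p (Q x) = p x)
    (hLp : ∀ x, L (p x) = 0) (hpp : ∀ x, p (p x) = p x) {u w : M} (h : L u = Q (L w + p w)) :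
    u = Q w + p u :=
  hinj <| by
    simp only [map_add, h, hLQ, hQp, hpQ, hLp, hpp]
    abel

section Galerkin

open Submodule

variable {E : Type*} [NormedAddCommGroup E] [InnerProductSpace ℝ E]
  {K : ℕ → Submodule ℝ E} [∀ n, (K n).HasOrthogonalProjection] {L : E →L[ℝ] E}

theorem eq_lineMap_starProjection_add_of_apply_eq (hK : Monotone K)
    (hL : (L : E →ₗ[ℝ] E).IsSymmetric) (hLK : ∀ n, MapsTo L (K n) (K n))
    (hLK0 : ∀ x ∈ K 0, L x = 0) (hinj : Function.Injective (L + (K 0).starProjection))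
    {m n : ℕ} {t : ℝ} {u w : E}
    (h : L u = lineMap (K m).starProjection (K n).starProjection t
      (L w + (K 0).starProjection w)) :
    u = lineMap (K m).starProjection (K n).starProjection t w + (K 0).starProjection u := by
  have hcomm : ∀ k x, (K k).starProjection (L x) = L ((K k).starProjection x) := fun k =>
    LinearMap.IsSymmetric.starProjection_apply_comm hL (hLK k)
  have hπ0 : ∀ k x, (K k).starProjection ((K 0).starProjection x) = (K 0).starProjection x :=
    fun k x => starProjection_eq_self_iff.2 (hK (Nat.zero_le k) ((K 0).starProjection_apply_mem x))
  have h0π : ∀ k x, (K 0).starProjection ((K k).starProjection x) = (K 0).starProjection x :=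
    fun k x => congr($(starProjection_comp_starProjection_of_le (hK (Nat.zero_le k))) x)
  refine eq_add_of_injective_add_of_apply_eq (p := (K 0).starProjection) hinj (fun x => ?_)
    (fun x => ?_) (fun x => ?_) (fun x => hLK0 _ (starProjection_apply_mem _ x))
    (fun x => starProjection_eq_self_iff.2 (starProjection_apply_mem _ x)) h
  · simp only [lineMap_apply_module', add_apply, smul_apply, sub_apply, map_add, map_smul,
      map_sub, hcomm]
  · simp only [lineMap_apply_module', add_apply, smul_apply, sub_apply, hπ0, sub_self,
      smul_zero, zero_add]
  · simp only [lineMap_apply_module', add_apply, smul_apply, sub_apply, map_add, map_smul,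
      map_sub, h0π, sub_self, smul_zero, zero_add]

theorem exists_strictMono_tendsto_of_eq_lineMap_starProjection_add [FiniteDimensional ℝ (K 0)]
    (hK : Monotone K) (hKdense : ⊤ ≤ (⨆ n, K n).topologicalClosure) {C : Set E}
    (hC : IsCompact C) {R : ℝ} {m n : ℕ → ℕ} (hm : Tendsto m atTop atTop)
    (hn : Tendsto n atTop atTop) {t : ℕ → ℝ} (ht : IsBoundedUnder (· ≤ ·) atTop (norm ∘ t))
    {u w : ℕ → E} (hw : ∀ k, w k ∈ C) (hu : ∀ k, ‖u k‖ ≤ R)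
    (huw : ∀ k, u k = lineMap (K (m k)).starProjection (K (n k)).starProjection (t k) (w k) +
      (K 0).starProjection (u k)) :
    ∃ u₀, ∃ σ : ℕ → ℕ, StrictMono σ ∧ Tendsto (u ∘ σ) atTop (𝓝 u₀) := by
  -- `K 0` is finite-dimensional, so its closed balls are compact.
  have hmem : ∀ k, (w k, (K 0).orthogonalProjectionOnto (u k)) ∈ C ×ˢ Metric.closedBall 0 R :=
    fun k => ⟨hw k, mem_closedBall_zero_iff.2
      ((norm_orthogonalProjectionOnto_apply_le _ _).trans (hu k))⟩
  obtain ⟨⟨v, z⟩, -, σ, hσ, hlim⟩ := (hC.prod (isCompact_closedBall 0 R)).tendsto_subseq hmem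
  have hσtop : Tendsto σ atTop atTop := hσ.tendsto_atTop
  have hQw := tendsto_lineMap_starProjection_apply hK hKdense (hm.comp hσtop) (hn.comp hσtop)
    (hσtop.isBoundedUnder_comp ht) hlim.fst_nhds
  have hz : Tendsto (fun k => (K 0).starProjection (u (σ k))) atTop (𝓝 (z : E)) :=
    (continuous_subtype_val.tendsto z).comp hlim.snd_nhds
  exact ⟨v + z, σ, hσ, (hQw.add hz).congr fun k => (huw (σ k)).symm⟩

theorem exists_mem_frontier_apply_eq_of_tendsto [FiniteDimensional ℝ (K 0)] (hK : Monotone K)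
    (hKdense : ⊤ ≤ (⨆ n, K n).topologicalClosure)
    (hL : (L : E →ₗ[ℝ] E).IsSymmetric) (hLK : ∀ n, MapsTo L (K n) (K n))
    (hLK0 : ∀ x ∈ K 0, L x = 0) (hinj : Function.Injective (L + (K 0).starProjection))
    {O : Set E} (hO : Bornology.IsBounded O) {Ψ Φ : E → E} (hΨ : ContinuousOn Ψ (closure O))
    (hΦ : ∀ u ∈ closure O, L (Φ u) + (K 0).starProjection (Φ u) = Ψ u)
    (hΦc : IsCompact (closure (Φ '' closure O))) {m n : ℕ → ℕ} (hm : Tendsto m atTop atTop)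
    (hn : Tendsto n atTop atTop) {t : ℕ → ℝ} (ht : IsBoundedUnder (· ≤ ·) atTop (norm ∘ t))
    {u : ℕ → E} (hu : ∀ k, u k ∈ frontier O)
    (heq : ∀ k, L (u k) = lineMap (K (m k)).starProjection (K (n k)).starProjection (t k)
      (Ψ (u k))) :
    ∃ u₀ ∈ frontier O, L u₀ = Ψ u₀ := by
  have hucl : ∀ k, u k ∈ closure O := fun k => frontier_subset_closure (hu k)
  obtain ⟨R, hR⟩ := isBounded_iff_forall_norm_le.1 hO.closure
  obtain ⟨u₀, σ, hσ, hlim⟩ := exists_strictMono_tendsto_of_eq_lineMap_starProjection_add hK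
    hKdense hΦc hm hn ht (fun k => subset_closure (mem_image_of_mem Φ (hucl k)))
    (fun k => hR _ (hucl k)) fun k => eq_lineMap_starProjection_add_of_apply_eq hK hL hLK hLK0
      hinj ((heq k).trans (by rw [hΦ _ (hucl k)]))
  have hfr : u₀ ∈ frontier O :=
    isClosed_frontier.mem_of_tendsto hlim (Eventually.of_forall fun k => hu (σ k))
  have hΨlim : Tendsto (fun k => Ψ (u (σ k))) atTop (𝓝 (Ψ u₀)) :=
    (hΨ _ (frontier_subset_closure hfr)).tendsto.comp
      (tendsto_nhdsWithin_iff.2 ⟨hlim, Eventually.of_forall fun k => hucl (σ k)⟩)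
  have hσtop : Tendsto σ atTop atTop := hσ.tendsto_atTop
  refine ⟨u₀, hfr, tendsto_nhds_unique ((L.continuous.tendsto _).comp hlim) ?_⟩
  simpa only [Function.comp_def, heq] using tendsto_lineMap_starProjection_apply hK hKdense
    (hm.comp hσtop) (hn.comp hσtop) (hσtop.isBoundedUnder_comp ht) hΨlim

end Galerkin

theorem stmt_17_general
    {X : Type*} [NormedAddCommGroup X] [InnerProductSpace ℝ X]
    (E : ℕ → Submodule ℝ X)
    (hfin : ∀ k, FiniteDimensional ℝ (E k))
    (hdense : (⨆ k, E k).topologicalClosure = ⊤)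
    (Xn : ℕ → Submodule ℝ X) (hXn : ∀ n, Xn n = ⨆ k ∈ Finset.range (n + 1), E k)
    (P : ℕ → X →L[ℝ] X)
    (hPmem : ∀ n x, P n x ∈ Xn n)
    (hPorth : ∀ n x, ∀ y ∈ Xn n, (inner ℝ (x - P n x) y : ℝ) = 0)
    (L : X →L[ℝ] X)
    (hLsa : ∀ x y : X, (inner ℝ (L x) y : ℝ) = inner ℝ x (L y))
    (hker : LinearMap.ker (L : X →ₗ[ℝ] X) = E 0)
    (hLE : ∀ k : ℕ, k ≠ 0 → (E k).map (L : X →ₗ[ℝ] X) = E k)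
    (hinj : ∀ x : X, L x + P 0 x = 0 → x = 0)
    (O : Set X) (hObdd : Bornology.IsBounded O)
    (Ψ : X → X) (hΨcont : ContinuousOn Ψ (closure O))
    (Φ : X → X) (hΦ : ∀ u ∈ closure O, L (Φ u) + P 0 (Φ u) = Ψ u)
    (hcpt : IsCompact (closure (Φ '' closure O)))
    (hnosol : ∀ u ∈ frontier O, L u - Ψ u ≠ 0) :
    ∃ n₀ : ℕ, ∀ n ≥ n₀, ∀ t ∈ Set.Icc (0 : ℝ) 1, ∀ u ∈ (Xn n : Set X) ∩ frontier O,
      L u - P n₀ (Ψ u) - t • (P n (Ψ u) - P n₀ (Ψ u)) ≠ 0 := by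
  obtain rfl : Xn = partialSups E := funext fun n => by
    rw [hXn, partialSups_eq_sup_range, Finset.sup_eq_iSup]
  have : ∀ n, (partialSups E n).HasOrthogonalProjection := fun n =>
    Submodule.hasOrthogonalProjection_of_inner_sub_eq_zero (P n) (hPmem n) (hPorth n)
  have hP : ∀ n, P n = (partialSups E n).starProjection := fun n =>
    ContinuousLinearMap.ext fun x =>
      ((partialSups E n).eq_starProjection_of_mem_of_inner_eq_zero (hPmem n x) (hPorth n x)).symm
  have : FiniteDimensional ℝ (partialSups E 0) := partialSups_zero E ▸ hfin 0
  have hLE0 : ∀ x ∈ partialSups E 0, L x = 0 := fun x hx => by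
    rwa [partialSups_zero, ← hker] at hx
  have hLEk : ∀ k, E k ≤ (E k).comap (L : X →ₗ[ℝ] X) := fun k => by
    rcases eq_or_ne k 0 with rfl | hk
    · exact hker ▸ LinearMap.ker_le_comap _
    · exact Submodule.map_le_iff_le_comap.1 (hLE k hk).le
  simp only [hP] at hinj hΦ ⊢
  by_contra! h
  choose n hn t ht u hu heq using h
  have heq' : ∀ k, L (u k) = lineMap (partialSups E k).starProjection
      (partialSups E (n k)).starProjection (t k) (Ψ (u k)) := fun k => by
    rw [lineMap_apply_module', add_apply, smul_apply, sub_apply, ← sub_eq_zero, ← heq k]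
    abel
  have htb : IsBoundedUnder (· ≤ ·) atTop (norm ∘ t) := isBoundedUnder_of
    ⟨1, fun k => show |t k| ≤ 1 from abs_le.2 ⟨by linarith [(ht k).1], (ht k).2⟩⟩
  obtain ⟨u₀, hu₀, hLu₀⟩ := exists_mem_frontier_apply_eq_of_tendsto (partialSups E).monotone
    (by rw [iSup_partialSups_eq, hdense]) hLsa (Submodule.mapsTo_partialSups hLEk) hLE0
    ((injective_iff_map_eq_zero _).2 hinj) hObdd hΨcont hΦ hcpt tendsto_id
    (tendsto_atTop_mono hn tendsto_id) htb (fun k => (hu k).2) heq'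
  exact hnosol u₀ hu₀ (sub_eq_zero.2 hLu₀)

/-- finite-dimensional approximation lemma: `X` a separable real
Hilbert space decomposed into pairwise orthogonal finite-dimensional subspaces
`E_k` with dense span, `X_n = ⊕_{k≤n} E_k` with orthogonal projections `P n`,
`L` bounded self-adjoint with `ker L = E₀`, `L(E_k) = E_k` for `k ≠ 0`,
`L + P₀` an isomorphism onto a closed (Hilbert) subspace `Y`, and `Ψ` continuous
on the closure of a bounded set `O` with values in `Y` such that
`(L+P₀)⁻¹ ∘ Ψ` (here `Φ`) has relatively compact image. If `Lu - Ψ(u) = 0` has no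
solution on `∂O`, then there is `n₀` such that for all `n ≥ n₀`, `t ∈ [0,1]`, the
equation `Lu - P_{n₀}Ψ(u) - t(P_n - P_{n₀})Ψ(u) = 0` has no solution in `X_n ∩ ∂O`. -/
theorem stmt_17
    {X : Type*} [NormedAddCommGroup X] [InnerProductSpace ℝ X] [CompleteSpace X]
    [TopologicalSpace.SeparableSpace X]
    (E : ℕ → Submodule ℝ X)
    (hfin : ∀ k, FiniteDimensional ℝ (E k))
    (horth : ∀ j k, j ≠ k → ∀ x ∈ E j, ∀ y ∈ E k, (inner ℝ x y : ℝ) = 0)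
    (hdense : (⨆ k, E k).topologicalClosure = ⊤)
    (Xn : ℕ → Submodule ℝ X) (hXn : ∀ n, Xn n = ⨆ k ∈ Finset.range (n + 1), E k)
    (P : ℕ → X →L[ℝ] X)
    (hPmem : ∀ n x, P n x ∈ Xn n)
    (hPorth : ∀ n x, ∀ y ∈ Xn n, (inner ℝ (x - P n x) y : ℝ) = 0)
    (L : X →L[ℝ] X)
    (hLsa : ∀ x y : X, (inner ℝ (L x) y : ℝ) = inner ℝ x (L y))
    (hker : LinearMap.ker (L : X →ₗ[ℝ] X) = E 0)
    (hLE : ∀ k : ℕ, k ≠ 0 → (E k).map (L : X →ₗ[ℝ] X) = E k)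
    (Y : Submodule ℝ X) (hYclosed : IsClosed (Y : Set X))
    (hrange : ∀ x : X, L x + P 0 x ∈ Y)
    (hinj : ∀ x : X, L x + P 0 x = 0 → x = 0)
    (hsurj : ∀ y ∈ Y, ∃ x : X, L x + P 0 x = y)
    (O : Set X) (hOopen : IsOpen O) (hObdd : Bornology.IsBounded O)
    (Ψ : X → X) (hΨcont : ContinuousOn Ψ (closure O))
    (hΨY : ∀ u ∈ closure O, Ψ u ∈ Y)
    (Φ : X → X) (hΦ : ∀ u ∈ closure O, L (Φ u) + P 0 (Φ u) = Ψ u)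
    (hcpt : IsCompact (closure (Φ '' closure O)))
    (hnosol : ∀ u ∈ frontier O, L u - Ψ u ≠ 0) :
    ∃ n₀ : ℕ, ∀ n ≥ n₀, ∀ t ∈ Set.Icc (0 : ℝ) 1, ∀ u ∈ (Xn n : Set X) ∩ frontier O,
      L u - P n₀ (Ψ u) - t • (P n (Ψ u) - P n₀ (Ψ u)) ≠ 0 :=
  stmt_17_general E hfin hdense Xn hXn P hPmem hPorth L hLsa hker hLE hinj O hObdd Ψ hΨcont Φ hΦ
    hcpt hnosol
end
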